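/- Let x be a crossing point of the link diagram K at which the level is not uniform with respect to the level partition associated to a join irreducible M(j,k). Then the marker of the minimal Kauffman state at x lies in the region where the level decreases in clockwise direction, and the marker of S(j,k) at x lies in the region where the level increases in clockwise direction. -/

import Mathlib

/-- An abstract combinatorial model of a connected link diagram `K`, together with a
distinguished segment `i` and the markers of the minimal Kauffman state relative to `i`.
`K0` is the set of crossing points, `K1` the set of segments, `Region` the set of regions
of the diagram.  At each crossing `x` the four segments are `seg x 0, …, seg x 3`, listed
in clockwise order, and `corner x p` is the region at `x` lying between `seg x p` and
`seg x (p+1)` in clockwise direction; a marker at `x` occupies one of these four corners. -/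
structure Diagram where
  K0 : Type
  K1 : Type
  Region : Type
  fin0 : Fintype K0
  fin1 : Fintype K1
  finR : Fintype Region
  seg : K0 → Fin 4 → K1
  corner : K0 → Fin 4 → Region
  /-- every segment has exactly two endpoints (= crossing/position pairs) -/
  seg_two : ∀ a : K1, ∃ e₁ e₂ : K0 × Fin 4, e₁ ≠ e₂ ∧ seg e₁.1 e₁.2 = a ∧
    seg e₂.1 e₂.2 = a ∧ ∀ e : K0 × Fin 4, seg e.1 e.2 = a → e = e₁ ∨ e = e₂
  /-- the distinguished segment `i` -/
  i : K1
  /-- the markers of the minimal Kauffman state relative to `i` -/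
  minState : K0 → Fin 4

namespace Diagram

/-- The region `R` is one of the (two) regions incident to the segment `a`. -/
def IncidentRegion (D : Diagram) (a : D.K1) (R : D.Region) : Prop :=
  ∃ x p, D.seg x p = a ∧ (R = D.corner x p ∨ R = D.corner x (p + 3))

/-- `m` is a Kauffman state relative to the segment `D.i`: every region of the diagram,
except the two regions incident to `i`, contains exactly one marker. -/
def IsState (D : Diagram) (m : D.K0 → Fin 4) : Prop :=
  ∀ R : D.Region, ¬ D.IncidentRegion D.i R → ∃! x : D.K0, D.corner x (m x) = R

/-- Clockwise rank of the position `p` at the crossing `x`, starting right after the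
marker of the minimal state: the segment immediately clockwise of the minimal-state
marker has rank `0`, and the one immediately counterclockwise of it has rank `3`.
Thus `seg x q` lies between `seg x p` and the minimal-state marker at `x` in clockwise
direction if and only if `rk x p < rk x q`. -/
def rk (D : Diagram) (x : D.K0) (p : Fin 4) : ℕ := (p - D.minState x - 1 : Fin 4).val

/-- `S` is closed in `T` under successors (relative to the minimal state): for all
segments `s ∈ S`, `t ∈ T` with a common endpoint `x` such that `t` lies between `s` and
the minimal-state marker at `x` in clockwise direction, `t ∈ S`. -/
def ClosedIn (D : Diagram) (T S : Set D.K1) : Prop :=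
  ∀ (x : D.K0) (p q : Fin 4), D.seg x p ∈ S → D.seg x q ∈ T →
    D.rk x p < D.rk x q → D.seg x q ∈ S

/-- The closure of `S` in `T`: the smallest subset of `T` containing `S` that is closed
in `T` under successors. -/
def closureIn (D : Diagram) (T S : Set D.K1) : Set D.K1 :=
  ⋂₀ {U : Set D.K1 | S ⊆ U ∧ U ⊆ T ∧ D.ClosedIn T U}

/-- two segments share an endpoint -/
def Meets (D : Diagram) (a b : D.K1) : Prop :=
  ∃ (x : D.K0) (p q : Fin 4), D.seg x p = a ∧ D.seg x q = b

/-- Auxiliary recursion for the level sets associated to the join irreducible `M(j,k)`: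
`(levelAux j m).1` is the level set `K(k-m)`, and `(levelAux j m).2` is the union
`K(k) ∪ K(k-1) ∪ ⋯ ∪ K(k-m)`. -/
def levelAux (D : Diagram) (j : D.K1) : ℕ → Set D.K1 × Set D.K1
  | 0 => (D.closureIn Set.univ {j}, D.closureIn Set.univ {j})
  | m + 1 =>
      let C := (levelAux D j m).2
      let N := D.closureIn Cᶜ {e | e ∈ Cᶜ ∧ ∃ b ∈ (levelAux D j m).1, D.Meets e b}
      (N, C ∪ N)

/-- The level set `K(d)` of the partition `K_1 = ⊔_{d=0}^{k} K(d)` associated to the join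
irreducible `M(j,k)`: `K(k)` is the closure of `{j}` in `K_1`; recursively, for
`d = k-1, …, 1`, `K(d)` is the closure, in the complement of `⋃_{ℓ>d} K(ℓ)`, of the set
of segments of that complement incident to a segment of `K(d+1)`; and `K(0)` is the
complement of `⋃_{ℓ>0} K(ℓ)`. -/
def Klevel (D : Diagram) (j : D.K1) (k : ℕ) (d : ℕ) : Set D.K1 :=
  if d = 0 then ((D.levelAux j (k - 1)).2)ᶜ else (D.levelAux j (k - d)).1

/-- the level of a segment: the `d` with `a ∈ K(d)` -/
noncomputable def level (D : Diagram) (j : D.K1) (k : ℕ) (a : D.K1) : ℕ :=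
  sInf {d : ℕ | a ∈ D.Klevel j k d}

/-- The set of markers `𝒮(j,k)`: at each crossing point, the marker is placed in the
region where the level increases in clockwise direction if such a region exists, and at
the position of the minimal-state marker otherwise. -/
noncomputable def Smark (D : Diagram) (j : D.K1) (k : ℕ) (x : D.K0) : Fin 4 := by
  classical
  exact if h : ∃ p : Fin 4, D.level j k (D.seg x p) < D.level j k (D.seg x (p + 1))
    then h.choose else D.minState x

end Diagram

/-! The cumulative unions `K(k) ∪ ⋯ ∪ K(k-m)` of the level sets are closed under successors in
all of `K_1`, since each level set is closed under successors in the complement of the higher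
ones. Hence the level can only grow along the clockwise rank at a crossing: going clockwise
around it, the level grows weakly except across the corner of the minimal-state marker. If the level
decreased weakly there as well, it would be constant around the crossing; and a non-constant
cyclic sequence must strictly increase somewhere, which is where `𝒮(j,k)` puts its marker. -/

open Fin.NatCast in
theorem Fin.apply_eq_apply_of_forall_le_apply_add_one {n : ℕ} [NeZero n] {α : Type*}
    [PartialOrder α] {f : Fin n → α} (h : ∀ p, f p ≤ f (p + 1)) (p q : Fin n) : f p = f q := by
  have le_add : ∀ (p : Fin n) (t : ℕ), f p ≤ f (p + t) := by
    intro p t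
    induction t with
    | zero => simp
    | succ t ih => exact ih.trans (by simpa [add_assoc] using h (p + t))
  have le_apply : ∀ p q : Fin n, f p ≤ f q := fun p q => by
    simpa using le_add p (q - p).val
  exact (le_apply p q).antisymm (le_apply q p)

namespace Diagram

variable {D : Diagram}

theorem closedIn_closureIn (T S : Set D.K1) : D.ClosedIn T (D.closureIn T S) :=
  fun x p q hp hq hlt _ hU => hU.2.2 x p q (hp _ hU) hq hlt

theorem closureIn_subset {T S : Set D.K1} (h : S ⊆ T) : D.closureIn T S ⊆ T :=
  fun _ ha => ha T ⟨h, subset_rfl, fun _ _ _ _ hq _ => hq⟩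

theorem rk_lt_rk_add_one {x : D.K0} {p : Fin 4} (hp : p ≠ D.minState x) :
    D.rk x p < D.rk x (p + 1) := by
  have hsub : p - D.minState x ≠ 0 := sub_ne_zero.mpr hp
  unfold rk
  rw [show p + 1 - D.minState x - 1 = p - D.minState x by abel]
  generalize p - D.minState x = a at hsub ⊢
  revert a
  decide

section levelAux

variable (j : D.K1)

theorem levelAux_fst_subset_snd (m : ℕ) : (D.levelAux j m).1 ⊆ (D.levelAux j m).2 := by
  cases m with
  | zero => exact subset_rfl
  | succ m => exact Set.subset_union_right

theorem levelAux_succ_fst_subset_compl (m : ℕ) :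
    (D.levelAux j (m + 1)).1 ⊆ (D.levelAux j m).2ᶜ :=
  closureIn_subset fun _ he => he.1

theorem monotone_levelAux_snd : Monotone fun m => (D.levelAux j m).2 :=
  monotone_nat_of_le_succ fun _ => Set.subset_union_left

theorem disjoint_levelAux_snd_fst {m n : ℕ} (h : m < n) :
    Disjoint (D.levelAux j m).2 (D.levelAux j n).1 := by
  obtain ⟨n, rfl⟩ : ∃ n', n = n' + 1 := ⟨n - 1, by omega⟩
  exact Set.disjoint_left.mpr fun a ham han =>
    levelAux_succ_fst_subset_compl j n han (monotone_levelAux_snd j (by omega : m ≤ n) ham)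

theorem closedIn_univ_levelAux_snd (m : ℕ) : D.ClosedIn Set.univ (D.levelAux j m).2 := by
  induction m with
  | zero => exact closedIn_closureIn _ _
  | succ m ih =>
    intro x p q hp _ hpq
    rcases hp with hp | hp
    · exact Or.inl (ih x p q hp trivial hpq)
    · by_cases hq : D.seg x q ∈ (D.levelAux j m).2
      · exact Or.inl hq
      · exact Or.inr (closedIn_closureIn _ _ x p q hp hq hpq)

end levelAux

variable {j : D.K1} {k : ℕ}

theorem Klevel_zero : D.Klevel j k 0 = (D.levelAux j (k - 1)).2ᶜ := rfl

theorem Klevel_of_ne_zero {d : ℕ} (hd : d ≠ 0) : D.Klevel j k d = (D.levelAux j (k - d)).1 :=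
  if_neg hd

theorem mem_levelAux_snd_iff {m : ℕ} (hm : m < k) {a : D.K1} :
    a ∈ (D.levelAux j m).2 ↔ k - m ≤ D.level j k a := by
  constructor
  · intro ha
    obtain ⟨ℓ, hℓm, haℓ⟩ : ∃ ℓ ≤ m, a ∈ (D.levelAux j ℓ).1 := by
      induction m with
      | zero => exact ⟨0, le_rfl, ha⟩
      | succ m ih =>
        rcases ha with ha | ha
        · obtain ⟨ℓ, hℓ, h⟩ := ih (by omega) ha
          exact ⟨ℓ, by omega, h⟩
        · exact ⟨m + 1, le_rfl, ha⟩
    have hmem : a ∈ D.Klevel j k (k - ℓ) := by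
      rwa [Klevel_of_ne_zero (by omega), Nat.sub_sub_self (by omega)]
    refine le_csInf ⟨_, hmem⟩ fun d hd => ?_
    by_contra! hdm
    rcases Nat.eq_zero_or_pos d with rfl | hd0
    · rw [Set.mem_ofPred_eq, Klevel_zero] at hd
      exact hd (monotone_levelAux_snd j (by omega) ha)
    · rw [Set.mem_ofPred_eq, Klevel_of_ne_zero hd0.ne'] at hd
      exact (disjoint_levelAux_snd_fst j (by omega)).notMem_of_mem_left ha hd
  · intro ha
    have hne : {d | a ∈ D.Klevel j k d}.Nonempty :=
      Set.nonempty_iff_ne_empty.mpr fun h => by simp [level, h] at ha; omega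
    have hlevel : a ∈ D.Klevel j k (D.level j k a) := Nat.sInf_mem hne
    rw [Klevel_of_ne_zero (by omega)] at hlevel
    exact monotone_levelAux_snd j (by omega) (levelAux_fst_subset_snd j _ hlevel)

theorem level_le (hk : 1 ≤ k) (a : D.K1) : D.level j k a ≤ k := by
  rcases Set.eq_empty_or_nonempty {d | a ∈ D.Klevel j k d} with h | h
  · simp [level, h]
  · by_contra! hlt
    -- by truncated subtraction, `Klevel d = Klevel k` for every `d > k`
    have ha : a ∈ D.Klevel j k (D.level j k a) := Nat.sInf_mem h
    rw [Klevel_of_ne_zero (by omega), Nat.sub_eq_zero_of_le hlt.le,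
      ← Nat.sub_self k, ← Klevel_of_ne_zero (by omega)] at ha
    exact hlt.not_ge (Nat.sInf_le ha)

theorem level_le_of_rk_lt (hk : 1 ≤ k) {x : D.K0} {p q : Fin 4} (h : D.rk x p < D.rk x q) :
    D.level j k (D.seg x p) ≤ D.level j k (D.seg x q) := by
  set t := D.level j k (D.seg x p)
  rcases Nat.eq_zero_or_pos t with ht | ht
  · exact ht ▸ Nat.zero_le _
  have hkt : k - (k - t) = t := Nat.sub_sub_self (level_le hk _)
  have hp : D.seg x p ∈ (D.levelAux j (k - t)).2 :=
    (mem_levelAux_snd_iff (by omega)).mpr hkt.le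
  have hq := closedIn_univ_levelAux_snd j _ x p q hp trivial h
  exact hkt ▸ (mem_levelAux_snd_iff (by omega)).mp hq

theorem level_seg_Smark_lt (x : D.K0)
    (h : ∃ p : Fin 4, D.level j k (D.seg x p) < D.level j k (D.seg x (p + 1))) :
    D.level j k (D.seg x (D.Smark j k x)) < D.level j k (D.seg x (D.Smark j k x + 1)) := by
  unfold Smark
  rw [dif_pos h]
  exact h.choose_spec

end Diagram

theorem markers_of_not_uniform_general (D : Diagram)
    (j : D.K1) (k : ℕ) (hk1 : 1 ≤ k)
    (x : D.K0)
    (hnadouniform : ¬ ∀ p q : Fin 4, D.level j k (D.seg x p) = D.level j k (D.seg x q)) :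
    D.level j k (D.seg x (D.minState x + 1)) < D.level j k (D.seg x (D.minState x)) ∧
    D.level j k (D.seg x (D.Smark j k x)) < D.level j k (D.seg x (D.Smark j k x + 1)) := by
  constructor
  · by_contra! hle
    refine hnadouniform (Fin.apply_eq_apply_of_forall_le_apply_add_one fun p => ?_)
    by_cases hp : p = D.minState x
    · exact hp ▸ hle
    · exact Diagram.level_le_of_rk_lt hk1 (Diagram.rk_lt_rk_add_one hp)
  · refine Diagram.level_seg_Smark_lt x ?_
    by_contra! hdec
    exact hnadouniform
      (Fin.apply_eq_apply_of_forall_le_apply_add_one (α := ℕᵒᵈ) hdec)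

/-- **Lemma 4.2 (b).** If the level (for the level partition associated to a join
irreducible `M(j,k)`) is not uniform at the crossing point `x`, then the minimal-state
marker at `x` lies in the region where the level decreases in clockwise direction, and
the marker of `𝒮(j,k)` at `x` lies in the region where the level increases in clockwise
direction.  (The corner `c` at `x` lies between `seg x c` and `seg x (c+1)` in clockwise
direction, so the level decreases clockwise there when
`level (seg x (c+1)) < level (seg x c)`, and increases when
`level (seg x c) < level (seg x (c+1))`.) -/
theorem markers_of_not_uniform (D : Diagram) (hmin : D.IsState D.minState)
    (dim : D.K1 → ℕ) (j : D.K1) (k : ℕ) (hk1 : 1 ≤ k) (hk2 : k ≤ dim j)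
    (x : D.K0)
    (hnadouniform : ¬ ∀ p q : Fin 4, D.level j k (D.seg x p) = D.level j k (D.seg x q)) :
    D.level j k (D.seg x (D.minState x + 1)) < D.level j k (D.seg x (D.minState x)) ∧
    D.level j k (D.seg x (D.Smark j k x)) < D.level j k (D.seg x (D.Smark j k x + 1)) :=
  markers_of_not_uniform_general D j k hk1 x hnadouniform
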